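/- Let H₀ be a complex Hilbert space and let A be a norm-closed subalgebra of B(H₀) possessing a contractive approximate identity. If a Hilbert A-module H is a generator or a cogenerator for the category of Hilbert A-modules, then its representation π_H : A → B(H) is injective. -/

import Mathlib

set_option synthInstance.maxHeartbeats 1000000
set_option maxHeartbeats 2000000

noncomputable section

open Filter

open scoped ENNReal

/-- A contractive approximate identity for a (possibly non-unital) normed algebra `A`:
a net `(e i)`, indexed by a nontrivial filter, with `‖e i‖ ≤ 1` for all `i`, such that
`e i * a → a` and `a * e i → a` in norm for every `a ∈ A`. -/
def HasCAI (A : Type) [NonUnitalNormedRing A] : Prop :=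
  ∃ (ι : Type) (l : Filter ι) (e : ι → A), l.NeBot ∧ (∀ i, ‖e i‖ ≤ 1) ∧
    ∀ a : A, Tendsto (fun i => e i * a) l (nhds a) ∧ Tendsto (fun i => a * e i) l (nhds a)

variable (A : Type) [NonUnitalNormedRing A] [NormedSpace ℂ A] [IsScalarTower ℂ A A]
  [SMulCommClass ℂ A A]

/-- A Hilbert `A`-module structure on the Hilbert space `K`: a contractive algebra
homomorphism `π : A → B(K)` which is nondegenerate, i.e. the linear span of
`{π a x : a ∈ A, x ∈ K}` is dense in `K`. -/
def IsHilbertRep {K : Type} [NormedAddCommGroup K] [InnerProductSpace ℂ K] [CompleteSpace K]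
    (π : A →ₙₐ[ℂ] (K →L[ℂ] K)) : Prop :=
  (∀ a : A, ‖π a‖ ≤ ‖a‖) ∧
  Dense ((Submodule.span ℂ {x : K | ∃ (a : A) (y : K), π a y = x} : Submodule ℂ K) : Set K)

/-- A bounded `A`-module map between Hilbert `A`-modules. -/
def IsModuleMap {K L : Type} [NormedAddCommGroup K] [InnerProductSpace ℂ K]
    [NormedAddCommGroup L] [InnerProductSpace ℂ L]
    (πK : A →ₙₐ[ℂ] (K →L[ℂ] K)) (πL : A →ₙₐ[ℂ] (L →L[ℂ] L)) (T : K →L[ℂ] L) : Prop :=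
  ∀ (a : A) (x : K), T (πK a x) = πL a (T x)

/-- `H` is a generator for the category of Hilbert `A`-modules: for all Hilbert
`A`-modules `K`, `L` and every nonzero bounded `A`-module map `R : K → L` there is a
bounded `A`-module map `V : H → K` with `R ∘ V ≠ 0`. -/
def IsGenerator {H : Type} [NormedAddCommGroup H] [InnerProductSpace ℂ H] [CompleteSpace H]
    (πH : A →ₙₐ[ℂ] (H →L[ℂ] H)) : Prop :=
  ∀ (K L : Type) [NormedAddCommGroup K] [InnerProductSpace ℂ K] [CompleteSpace K]
    [NormedAddCommGroup L] [InnerProductSpace ℂ L] [CompleteSpace L],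
    ∀ (πK : A →ₙₐ[ℂ] (K →L[ℂ] K)) (πL : A →ₙₐ[ℂ] (L →L[ℂ] L)),
      IsHilbertRep A πK → IsHilbertRep A πL →
      ∀ R : K →L[ℂ] L, IsModuleMap A πK πL R → R ≠ 0 →
        ∃ V : H →L[ℂ] K, IsModuleMap A πH πK V ∧ R.comp V ≠ 0

/-- `H` is a cogenerator for the category of Hilbert `A`-modules: for all Hilbert
`A`-modules `K`, `L` and every nonzero bounded `A`-module map `R : K → L` there is a
bounded `A`-module map `V : L → H` with `V ∘ R ≠ 0`. -/
def IsCogenerator {H : Type} [NormedAddCommGroup H] [InnerProductSpace ℂ H] [CompleteSpace H]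
    (πH : A →ₙₐ[ℂ] (H →L[ℂ] H)) : Prop :=
  ∀ (K L : Type) [NormedAddCommGroup K] [InnerProductSpace ℂ K] [CompleteSpace K]
    [NormedAddCommGroup L] [InnerProductSpace ℂ L] [CompleteSpace L],
    ∀ (πK : A →ₙₐ[ℂ] (K →L[ℂ] K)) (πL : A →ₙₐ[ℂ] (L →L[ℂ] L)),
      IsHilbertRep A πK → IsHilbertRep A πL →
      ∀ R : K →L[ℂ] L, IsModuleMap A πK πL R → R ≠ 0 →
        ∃ V : L →L[ℂ] H, IsModuleMap A πL πH V ∧ V.comp R ≠ 0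

instance nonUnitalSubalgebraNormedSpaceCLM (H₀ : Type) [NormedAddCommGroup H₀]
    [InnerProductSpace ℂ H₀] (B : NonUnitalSubalgebra ℂ (H₀ →L[ℂ] H₀)) : NormedSpace ℂ B :=
  SubmoduleClass.toNormedSpace (R := ℂ) B

/-!
Let `K₀ ⊆ H₀` be the closed span of `B H₀`. Thanks to the approximate identity, `K₀` is a Hilbert
`B`-module on which `B` acts faithfully, so it suffices to show that `πH a = 0` forces `a` to act
as zero on every Hilbert module `K`. Let `J = ker πH`, a two-sided ideal.

If `H` is a generator, the common kernel `M` of `π_K(J)` is a closed submodule containing the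
range of every module map `H → K`; the quotient map `K → K/M` kills all of them, so it
vanishes and `M = K`.

If `H` is a cogenerator, the closed span `N` of `π_K(J) K` is a Hilbert submodule (nondegenerate,
again by the approximate identity) annihilated by every module map `K → H`; so its inclusion
into `K` vanishes and `N = 0`.
-/

open scoped Topology

theorem ContinuousLinearMap.norm_restrict_le {𝕜 E F : Type*} [NontriviallyNormedField 𝕜]
    [NormedAddCommGroup E] [NormedSpace 𝕜 E] [NormedAddCommGroup F] [NormedSpace 𝕜 F]
    (f : E →L[𝕜] F) {p : Submodule 𝕜 E} {q : Submodule 𝕜 F} (h : ∀ x ∈ p, f x ∈ q) :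
    ‖f.restrict h‖ ≤ ‖f‖ :=
  (f.restrict h).opNorm_le_bound (norm_nonneg f) fun x => f.le_opNorm x

theorem Submodule.orthogonalProjectionOnto_orthogonal_map_starProjection {𝕜 E : Type*} [RCLike 𝕜]
    [NormedAddCommGroup E] [InnerProductSpace 𝕜 E] {W : Submodule 𝕜 E} [W.HasOrthogonalProjection]
    {f : E →L[𝕜] E} (hf : ∀ x ∈ W, f x ∈ W) (z : E) :
    Wᗮ.orthogonalProjectionOnto (f (Wᗮ.starProjection z)) = Wᗮ.orthogonalProjectionOnto (f z) := by
  have hW : f (W.starProjection z) ∈ Wᗮᗮ :=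
    W.le_orthogonal_orthogonal (hf _ (W.orthogonalProjectionOnto z).2)
  rw [starProjection_orthogonal_val, map_sub, map_sub,
    orthogonalProjectionOnto_apply_of_mem_orthogonal hW, sub_zero]

namespace NonUnitalAlgHom

variable {𝒜 K : Type*} [NonUnitalNonAssocSemiring 𝒜] [Module ℂ 𝒜]
  [NormedAddCommGroup K] [InnerProductSpace ℂ K] (π : 𝒜 →ₙₐ[ℂ] (K →L[ℂ] K))

def restrictRep (W : Submodule ℂ K) (hW : ∀ a, ∀ x ∈ W, π a x ∈ W) :
    𝒜 →ₙₐ[ℂ] (W →L[ℂ] W) where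
  toFun a := (π a).restrict (hW a)
  map_smul' c a := by ext; simp
  map_zero' := by ext; simp
  map_add' a b := by ext; simp
  map_mul' a b := by ext; simp

@[simp]
theorem coe_restrictRep_apply (W : Submodule ℂ K) (hW : ∀ a, ∀ x ∈ W, π a x ∈ W) (a : 𝒜) (x : W) :
    (π.restrictRep W hW a x : K) = π a x :=
  rfl

theorem norm_restrictRep_le (W : Submodule ℂ K) (hW : ∀ a, ∀ x ∈ W, π a x ∈ W) (a : 𝒜) :
    ‖π.restrictRep W hW a‖ ≤ ‖π a‖ :=
  (π a).norm_restrict_le (hW a)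

/-- The quotient of `K` by a closed invariant subspace `W`, realised on `Wᗮ`. -/
def compressRep (W : Submodule ℂ K) [W.HasOrthogonalProjection] (hW : ∀ a, ∀ x ∈ W, π a x ∈ W) :
    𝒜 →ₙₐ[ℂ] (Wᗮ →L[ℂ] Wᗮ) where
  toFun a := Wᗮ.orthogonalProjectionOnto ∘L π a ∘L Wᗮ.subtypeL
  map_smul' c a := by ext; simp
  map_zero' := by ext; simp
  map_add' a b := by ext; simp
  map_mul' a b := by
    ext ξ : 1
    rw [map_mul]
    exact (Submodule.orthogonalProjectionOnto_orthogonal_map_starProjection (hW a) (π b ξ)).symm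

theorem norm_compressRep_le (W : Submodule ℂ K) [W.HasOrthogonalProjection]
    (hW : ∀ a, ∀ x ∈ W, π a x ∈ W) (a : 𝒜) : ‖π.compressRep W hW a‖ ≤ ‖π a‖ :=
  calc ‖Wᗮ.orthogonalProjectionOnto ∘L π a ∘L Wᗮ.subtypeL‖
      ≤ ‖Wᗮ.orthogonalProjectionOnto‖ * (‖π a‖ * ‖Wᗮ.subtypeL‖) :=
        (ContinuousLinearMap.opNorm_comp_le _ _).trans
          (mul_le_mul_of_nonneg_left (ContinuousLinearMap.opNorm_comp_le _ _) (norm_nonneg _))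
    _ ≤ 1 * (‖π a‖ * 1) := by
        gcongr
        · exact Submodule.orthogonalProjectionOnto_norm_le _
        · exact Submodule.norm_subtypeL_le _
    _ = ‖π a‖ := by ring

end NonUnitalAlgHom

section HilbertModule

variable {𝒜 : Type} [NonUnitalNormedRing 𝒜] [NormedSpace ℂ 𝒜]
  {K : Type} [NormedAddCommGroup K] [InnerProductSpace ℂ K] {π : 𝒜 →ₙₐ[ℂ] (K →L[ℂ] K)}

theorem isModuleMap_orthogonalProjectionOnto (W : Submodule ℂ K) [W.HasOrthogonalProjection]
    (hW : ∀ a, ∀ x ∈ W, π a x ∈ W) :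
    IsModuleMap 𝒜 π (π.compressRep W hW) Wᗮ.orthogonalProjectionOnto := fun a x =>
  (Submodule.orthogonalProjectionOnto_orthogonal_map_starProjection (hW a) x).symm

theorem isModuleMap_subtypeL (W : Submodule ℂ K) (hW : ∀ a, ∀ x ∈ W, π a x ∈ W) :
    IsModuleMap 𝒜 (π.restrictRep W hW) π W.subtypeL := fun _ _ => rfl

def essentialSubspace (π : 𝒜 →ₙₐ[ℂ] (K →L[ℂ] K)) (J : Set 𝒜) : Submodule ℂ K :=
  (Submodule.span ℂ {x | ∃ b ∈ J, ∃ y, π b y = x}).topologicalClosure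

theorem mapsTo_essentialSubspace {J : Set 𝒜} (hJ : ∀ c, ∀ b ∈ J, c * b ∈ J) (a : 𝒜) :
    ∀ x ∈ essentialSubspace π J, π a x ∈ essentialSubspace π J := by
  refine Submodule.topologicalClosure_minimal (t := (essentialSubspace π J).comap (π a).toLinearMap)
    _ (Submodule.span_le.2 ?_) ((Submodule.isClosed_topologicalClosure _).preimage (π a).continuous)
  rintro _ ⟨b, hb, y, rfl⟩
  refine Submodule.le_topologicalClosure _ (Submodule.subset_span ⟨a * b, hJ a b hb, y, ?_⟩)
  rw [map_mul]
  rfl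

theorem injective_restrictRep_essentialSubspace_univ (hπ : Function.Injective π) {ι : Type*}
    {l : Filter ι} [l.NeBot] {e : ι → 𝒜} (he : ∀ c, Tendsto (fun i => c * e i) l (𝓝 c)) :
    Function.Injective
      (π.restrictRep _ (mapsTo_essentialSubspace (J := Set.univ) fun _ _ _ => trivial)) := by
  refine (injective_iff_map_eq_zero _).2 fun c hc => ?_
  have hce : ∀ i, c * e i = 0 := fun i => hπ <| by
    ext y
    have hy : π (e i) y ∈ essentialSubspace π Set.univ :=
      Submodule.le_topologicalClosure _ (Submodule.subset_span ⟨e i, trivial, y, rfl⟩)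
    simpa [map_mul] using congrArg Subtype.val (ContinuousLinearMap.ext_iff.1 hc ⟨_, hy⟩)
  exact tendsto_nhds_unique (he c) (by simpa only [hce] using tendsto_const_nhds)

variable [CompleteSpace K]

instance (J : Set 𝒜) : CompleteSpace (essentialSubspace π J) :=
  Submodule.topologicalClosure.completeSpace _

theorem IsHilbertRep.compressRep (hπ : IsHilbertRep 𝒜 π) (W : Submodule ℂ K)
    [W.HasOrthogonalProjection] (hW : ∀ a, ∀ x ∈ W, π a x ∈ W) :
    IsHilbertRep 𝒜 (π.compressRep W hW) := by
  refine ⟨fun a => (π.norm_compressRep_le W hW a).trans (hπ.1 a), ?_⟩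
  set P := Wᗮ.orthogonalProjectionOnto
  have hP : DenseRange P := fun ξ =>
    subset_closure ⟨ξ, Submodule.orthogonalProjectionOnto_mem_subspace_eq_self ξ⟩
  refine (hP.dense_image P.continuous hπ.2).mono
    ((Submodule.image_span_subset_span P.toLinearMap _).trans (Submodule.span_mono ?_))
  rintro _ ⟨_, ⟨a, y, rfl⟩, rfl⟩
  exact ⟨a, P y, (isModuleMap_orthogonalProjectionOnto W hW a y).symm⟩

theorem isHilbertRep_restrictRep_essentialSubspace (hπ : ∀ a, ‖π a‖ ≤ ‖a‖) {J : Set 𝒜}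
    (hJ : ∀ c, ∀ b ∈ J, c * b ∈ J) {ι : Type*} {l : Filter ι} [l.NeBot] {e : ι → 𝒜}
    (he : ∀ b ∈ J, Tendsto (fun i => e i * b) l (𝓝 b)) :
    IsHilbertRep 𝒜 (π.restrictRep _ (mapsTo_essentialSubspace hJ)) := by
  set N := essentialSubspace π J
  set πN := π.restrictRep N (mapsTo_essentialSubspace hJ)
  refine ⟨fun a => (π.norm_restrictRep_le _ _ a).trans (hπ a), ?_⟩
  have hcont : ∀ y : K, Continuous fun a => π a y := fun y =>
    (ContinuousLinearMap.apply ℂ K y).continuous.comp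
      (AddMonoidHomClass.continuous_of_bound π 1 fun a => by simpa using hπ a)
  set X := Submodule.span ℂ {x : N | ∃ (a : 𝒜) (y : N), πN a y = x}
  suffices N ≤ (X.map N.subtype).topologicalClosure by
    rw [Topology.IsInducing.subtypeVal.dense_iff]
    intro x
    have hx : (x : K) ∈ ((X.map N.subtype).topologicalClosure : Set K) := this x.2
    rwa [Submodule.topologicalClosure_coe, Submodule.map_coe] at hx
  refine Submodule.topologicalClosure_minimal _ (Submodule.span_le.2 ?_)
    (Submodule.isClosed_topologicalClosure _)
  rintro _ ⟨b, hb, y, rfl⟩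
  have hbN : π b y ∈ N := Submodule.le_topologicalClosure _ (Submodule.subset_span ⟨b, hb, y, rfl⟩)
  refine mem_closure_of_tendsto (((hcont y).tendsto b).comp (he b hb))
    (Eventually.of_forall fun i => ?_)
  refine ⟨πN (e i) ⟨π b y, hbN⟩, Submodule.subset_span ⟨e i, _, rfl⟩, ?_⟩
  simp only [Function.comp_apply, map_mul]
  rfl

end HilbertModule

section GeneratorCogenerator

variable {𝒜 : Type} [NonUnitalNormedRing 𝒜] [NormedSpace ℂ 𝒜]
  {H : Type} [NormedAddCommGroup H] [InnerProductSpace ℂ H] [CompleteSpace H]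
  {πH : 𝒜 →ₙₐ[ℂ] (H →L[ℂ] H)}
  {K : Type} [NormedAddCommGroup K] [InnerProductSpace ℂ K] [CompleteSpace K]
  {πK : 𝒜 →ₙₐ[ℂ] (K →L[ℂ] K)}

theorem IsGenerator.eq_top_of_forall_apply_mem (hH : IsGenerator 𝒜 πH) (hK : IsHilbertRep 𝒜 πK)
    (W : Submodule ℂ K) [W.HasOrthogonalProjection] (hW : ∀ a, ∀ x ∈ W, πK a x ∈ W)
    (hV : ∀ V : H →L[ℂ] K, IsModuleMap 𝒜 πH πK V → ∀ z, V z ∈ W) : W = ⊤ := by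
  by_contra hWtop
  have hP : Wᗮ.orthogonalProjectionOnto ≠ 0 := fun hP => hWtop <| by
    rw [← W.orthogonal_orthogonal, ← Submodule.ker_orthogonalProjectionOnto, hP]
    exact LinearMap.ker_zero
  obtain ⟨V, hVmod, hPV⟩ := hH K Wᗮ πK (πK.compressRep W hW) hK (hK.compressRep W hW) _
    (isModuleMap_orthogonalProjectionOnto W hW) hP
  refine hPV (ContinuousLinearMap.ext fun z => ?_)
  rw [ContinuousLinearMap.comp_apply, zero_apply, Submodule.orthogonalProjectionOnto_eq_zero_iff]
  exact W.le_orthogonal_orthogonal (hV V hVmod z)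

theorem IsCogenerator.eq_bot_of_forall_apply_eq_zero (hH : IsCogenerator 𝒜 πH)
    (hK : IsHilbertRep 𝒜 πK) (W : Submodule ℂ K) [CompleteSpace W]
    (hW : ∀ a, ∀ x ∈ W, πK a x ∈ W) (hWrep : IsHilbertRep 𝒜 (πK.restrictRep W hW))
    (hV : ∀ V : K →L[ℂ] H, IsModuleMap 𝒜 πK πH V → ∀ x ∈ W, V x = 0) : W = ⊥ := by
  by_contra hWbot
  have hι : W.subtypeL ≠ 0 := fun hι =>
    hWbot <| (Submodule.eq_bot_iff _).2 fun x hx => by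
      simpa using congrArg (· ⟨x, hx⟩) hι
  obtain ⟨V, hVmod, hVι⟩ := hH W K _ πK hWrep hK W.subtypeL (isModuleMap_subtypeL W hW) hι
  exact hVι <| ContinuousLinearMap.ext fun x => hV V hVmod x x.2

theorem IsGenerator.map_eq_zero_of_map_eq_zero (hH : IsGenerator 𝒜 πH) (hK : IsHilbertRep 𝒜 πK)
    {a : 𝒜} (ha : πH a = 0) : πK a = 0 := by
  set M := ⨅ b : {b : 𝒜 // πH b = 0}, (πK b).ker
  have hM : IsClosed (M : Set K) := by
    rw [Submodule.coe_iInf]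
    exact isClosed_iInter fun b => (πK b).isClosed_ker
  have : CompleteSpace M := hM.completeSpace_coe
  have hMinv : ∀ c, ∀ x ∈ M, πK c x ∈ M := by
    simp only [M, Submodule.mem_iInf, LinearMap.mem_ker, ContinuousLinearMap.coe_coe]
    intro c x hx b
    simpa [map_mul] using hx ⟨b * c, by rw [map_mul, b.2, zero_mul]⟩
  have hMtop := hH.eq_top_of_forall_apply_mem hK M hMinv fun V hV z => by
    simp only [M, Submodule.mem_iInf, LinearMap.mem_ker, ContinuousLinearMap.coe_coe]
    intro b
    rw [← hV, b.2, zero_apply, map_zero]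
  ext x
  have hx : x ∈ M := hMtop ▸ Submodule.mem_top
  exact (Submodule.mem_iInf _).1 hx ⟨a, ha⟩

theorem IsCogenerator.map_eq_zero_of_map_eq_zero (hH : IsCogenerator 𝒜 πH)
    (hK : IsHilbertRep 𝒜 πK) {ι : Type*} {l : Filter ι} [l.NeBot] {e : ι → 𝒜}
    (he : ∀ b, Tendsto (fun i => e i * b) l (𝓝 b)) {a : 𝒜} (ha : πH a = 0) : πK a = 0 := by
  set J := {b : 𝒜 | πH b = 0}
  have hJ : ∀ c, ∀ b ∈ J, c * b ∈ J := fun c b (hb : πH b = 0) =>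
    show πH (c * b) = 0 by rw [map_mul, hb, mul_zero]
  have hN := hH.eq_bot_of_forall_apply_eq_zero hK (essentialSubspace πK J)
    (mapsTo_essentialSubspace hJ)
    (isHilbertRep_restrictRep_essentialSubspace hK.1 hJ fun b _ => he b) fun V hV => by
      refine Submodule.topologicalClosure_minimal (t := (V : K →ₗ[ℂ] H).ker) _
        (Submodule.span_le.2 ?_) V.isClosed_ker
      rintro _ ⟨b, hb : πH b = 0, y, rfl⟩
      rw [SetLike.mem_coe, LinearMap.mem_ker, ContinuousLinearMap.coe_coe, hV, hb, zero_apply]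
  ext x
  have hx : πK a x ∈ essentialSubspace πK J :=
    Submodule.le_topologicalClosure _ (Submodule.subset_span ⟨a, ha, x, rfl⟩)
  simpa [hN] using hx

end GeneratorCogenerator

theorem generator_or_cogenerator_faithful_general
    (H₀ : Type) [NormedAddCommGroup H₀] [InnerProductSpace ℂ H₀] [CompleteSpace H₀]
    (B : NonUnitalSubalgebra ℂ (H₀ →L[ℂ] H₀))
    (hcai : HasCAI ↥B)
    (H : Type) [NormedAddCommGroup H] [InnerProductSpace ℂ H] [CompleteSpace H]
    (πH : ↥B →ₙₐ[ℂ] (H →L[ℂ] H))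
    (h : IsGenerator ↥B πH ∨ IsCogenerator ↥B πH) :
    Function.Injective ⇑πH := by
  obtain ⟨ι, l, e, hl, -, he⟩ := hcai
  let π₀ : ↥B →ₙₐ[ℂ] (H₀ →L[ℂ] H₀) := NonUnitalSubalgebraClass.subtype B
  have hK := isHilbertRep_restrictRep_essentialSubspace (π := π₀) (fun _ => le_rfl)
    (fun _ _ _ => Set.mem_univ _) fun b _ => (he b).1
  have hfaithful := injective_restrictRep_essentialSubspace_univ (π := π₀) Subtype.val_injective
    fun c => (he c).2
  refine (injective_iff_map_eq_zero πH).2 fun a ha => (injective_iff_map_eq_zero _).1 hfaithful a ?_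
  rcases h with hgen | hcogen
  · exact hgen.map_eq_zero_of_map_eq_zero hK ha
  · exact hcogen.map_eq_zero_of_map_eq_zero hK (fun b => (he b).1) ha

/-- If `A` is a norm-closed subalgebra of `B(H₀)` with a contractive approximate identity
and the Hilbert `A`-module `H` is a generator or a cogenerator for the category of
Hilbert `A`-modules, then its representation `πH : A → B(H)` is injective. -/
theorem generator_or_cogenerator_faithful
    (H₀ : Type) [NormedAddCommGroup H₀] [InnerProductSpace ℂ H₀] [CompleteSpace H₀]
    (B : NonUnitalSubalgebra ℂ (H₀ →L[ℂ] H₀)) (hB : IsClosed (B : Set (H₀ →L[ℂ] H₀)))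
    (hcai : HasCAI ↥B)
    (H : Type) [NormedAddCommGroup H] [InnerProductSpace ℂ H] [CompleteSpace H]
    (πH : ↥B →ₙₐ[ℂ] (H →L[ℂ] H)) (hrep : IsHilbertRep ↥B πH)
    (h : IsGenerator ↥B πH ∨ IsCogenerator ↥B πH) :
    Function.Injective ⇑πH :=
  generator_or_cogenerator_faithful_general H₀ B hcai H πH h
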